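/- arXiv:2109.04972 — 2 statements merged into one kernel-verified Lean document; each statement's English description precedes it below -/
import Mathlib

section
/- Let K ⊆ ℝⁿ be a bounded star-shaped domain with smooth boundary, let u : S^{n-1} → (−1, ∞) be the smooth function such that T(x) := (1+u(x))x ∈ ∂K for every x ∈ S^{n-1}, and set v := ∇u/(1+u). Then the mean curvature of ∂K at T(x) is H_{T(x)} = (1/((1+u)√(1+|v|²))) · ( n−1 − Δu/(1+u) + |v|²/(1+|v|²) + ∇²u[∇u, ∇u]/((1+u)³ (1+|v|²)) ), where Δ and ∇² denote the Laplace–Beltrami operator and the Hessian on S^{n-1}. -/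
open MeasureTheory Metric Set Real
open scoped ENNReal RealInnerProductSpace Topology
open Filter

noncomputable section

abbrev Euc (n : ℕ) := EuclideanSpace ℝ (Fin n)

section AuxLemmas

lemma trace_real (f : ℝ →ₗ[ℝ] ℝ) : LinearMap.trace ℝ ℝ f = f 1 := by
  have h : f = (f 1) • LinearMap.id := by
    ext
    simp
  rw [h, LinearMap.map_smul, LinearMap.trace_id]
  simp

lemma trace_smulRight {n : ℕ} (ℓ : Euc n →L[ℝ] ℝ) (b : Euc n) :
    LinearMap.trace ℝ (Euc n) ((ℓ.smulRight b : Euc n →L[ℝ] Euc n) : Euc n →ₗ[ℝ] Euc n) = ℓ b := by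
  have h : ((ℓ.smulRight b : Euc n →L[ℝ] Euc n) : Euc n →ₗ[ℝ] Euc n)
      = (LinearMap.toSpanSingleton ℝ (Euc n) b).comp (ℓ : Euc n →ₗ[ℝ] ℝ) := by
    ext w; simp [LinearMap.toSpanSingleton_apply]
  rw [h, LinearMap.trace_comp_comm', trace_real]
  simp [LinearMap.toSpanSingleton_apply]

lemma hasFDerivAt_norm' {n : ℕ} {y : Euc n} (hy : y ≠ 0) :
    HasFDerivAt (fun z : Euc n => ‖z‖) (‖y‖⁻¹ • innerSL ℝ y) y := by
  have h1 : HasFDerivAt (fun z : Euc n => ⟪z, z⟫)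
      ((fderivInnerCLM ℝ (y, y)).comp ((ContinuousLinearMap.id ℝ (Euc n)).prod
        (ContinuousLinearMap.id ℝ (Euc n)))) y :=
    (hasFDerivAt_id y).inner ℝ (hasFDerivAt_id y)
  have hyn : ‖y‖ ≠ 0 := norm_ne_zero_iff.2 hy
  have h0 : ⟪y, y⟫ ≠ (0:ℝ) := by
    rw [real_inner_self_eq_norm_sq]
    positivity
  have h2 := HasDerivAt.comp_hasFDerivAt (f := fun z : Euc n => ⟪z, z⟫) y
    (Real.hasDerivAt_sqrt h0) h1
  have hfun : (fun z : Euc n => Real.sqrt ⟪z, z⟫) = fun z : Euc n => ‖z‖ := by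
    funext z; rw [real_inner_self_eq_norm_sq, Real.sqrt_sq (norm_nonneg z)]
  have hns : Real.sqrt ⟪y, y⟫ = ‖y‖ := by
    rw [real_inner_self_eq_norm_sq, Real.sqrt_sq (norm_nonneg y)]
  rw [show (Real.sqrt ∘ fun z : Euc n => ⟪z, z⟫) = fun z : Euc n => ‖z‖ from hfun ▸ rfl] at h2
  refine h2.congr_fderiv ?_
  ext w
  simp only [ContinuousLinearMap.smul_apply, innerSL_apply_apply, ContinuousLinearMap.coe_comp',
    Function.comp_apply, ContinuousLinearMap.prod_apply, ContinuousLinearMap.coe_id', id_eq,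
    fderivInnerCLM_apply, smul_eq_mul, hns]
  rw [real_inner_comm w y]
  field_simp
  ring


section Grad
variable {n : ℕ} {u : Euc n → ℝ}
  (hsm : ContDiffOn ℝ (⊤ : ℕ∞) u {x : Euc n | x ≠ 0})
  (hom : ∀ x : Euc n, x ≠ 0 → ∀ t : ℝ, 0 < t → u (t • x) = u x)

lemma inner_gradient (f : Euc n → ℝ) (z w : Euc n) :
    ⟪gradient f z, w⟫ = fderiv ℝ f z w :=
  InnerProductSpace.toDual_symm_apply

include hsm in
lemma cd_at {z : Euc n} (hz : z ≠ 0) : ContDiffAt ℝ (⊤ : ℕ∞) u z :=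
  hsm.contDiffAt (isOpen_ne.mem_nhds hz)

include hsm in
lemma diff_at {z : Euc n} (hz : z ≠ 0) : DifferentiableAt ℝ u z :=
  (cd_at hsm hz).differentiableAt (by simp)

include hsm in
lemma fderiv_cd {z : Euc n} (hz : z ≠ 0) : ContDiffAt ℝ 1 (fderiv ℝ u) z :=
  (cd_at hsm hz).fderiv_right (by exact WithTop.coe_le_coe.2 (le_top (a := ((1 + 1 : ℕ) : ℕ∞))))

include hsm in
lemma grad_cd {z : Euc n} (hz : z ≠ 0) : ContDiffAt ℝ 1 (gradient u) z := by
  exact ((InnerProductSpace.toDual ℝ (Euc n)).symm.contDiff.contDiffAt).comp z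
    (fderiv_cd hsm hz)

include hsm in
lemma grad_diff {z : Euc n} (hz : z ≠ 0) : DifferentiableAt ℝ (gradient u) z :=
  (grad_cd hsm hz).differentiableAt one_ne_zero

include hsm hom in
lemma euler {z : Euc n} (hz : z ≠ 0) : fderiv ℝ u z z = 0 := by
  have hcurve : HasDerivAt (fun t : ℝ => t • z) z 1 := by
    simpa using (hasDerivAt_id (1:ℝ)).smul_const z
  have hfd : HasFDerivAt u (fderiv ℝ u ((1:ℝ) • z)) ((1:ℝ) • z) :=
    (diff_at hsm (by simpa using hz)).hasFDerivAt
  have h1 := HasFDerivAt.comp_hasDerivAt (f := fun t : ℝ => t • z) 1 hfd hcurve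
  rw [one_smul] at h1
  have h2 : (fun t : ℝ => u (t • z)) =ᶠ[𝓝 (1:ℝ)] fun _ => u z := by
    filter_upwards [eventually_gt_nhds zero_lt_one] with t ht
    exact hom z hz t ht
  have h3 : HasDerivAt (fun t : ℝ => u (t • z)) 0 1 :=
    (hasDerivAt_const (1:ℝ) (u z)).congr_of_eventuallyEq h2
  exact h1.unique h3

include hsm hom in
lemma fderiv_scale {z : Euc n} (hz : z ≠ 0) {t : ℝ} (ht : 0 < t) :
    fderiv ℝ u z = (fderiv ℝ u (t • z)).comp (t • ContinuousLinearMap.id ℝ (Euc n)) := by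
  have htz : t • z ≠ 0 := smul_ne_zero (ne_of_gt ht) hz
  have hmul : HasFDerivAt (fun y : Euc n => t • y) (t • ContinuousLinearMap.id ℝ (Euc n)) z :=
    (hasFDerivAt_id z).const_smul t
  have h1 : HasFDerivAt (fun y : Euc n => u (t • y))
      ((fderiv ℝ u (t • z)).comp (t • ContinuousLinearMap.id ℝ (Euc n))) z :=
    HasFDerivAt.comp z (diff_at hsm htz).hasFDerivAt hmul
  have h2 : (fun y : Euc n => u (t • y)) =ᶠ[𝓝 z] u := by
    filter_upwards [isOpen_ne.mem_nhds hz] with y hy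
    exact hom y hy t ht
  exact (h1.congr_of_eventuallyEq h2.symm).fderiv

include hsm hom in
lemma grad_scale {z : Euc n} (hz : z ≠ 0) {t : ℝ} (ht : 0 < t) :
    gradient u (t • z) = t⁻¹ • gradient u z := by
  apply ext_inner_right ℝ
  intro w
  rw [real_inner_smul_left, inner_gradient, inner_gradient]
  have h := fderiv_scale hsm hom hz ht
  have h2 : fderiv ℝ u z w = t * fderiv ℝ u (t • z) w := by
    rw [h]; simp
  rw [h2]
  field_simp

include hsm hom in
lemma hess_scale {z : Euc n} (hz : z ≠ 0) {t : ℝ} (ht : 0 < t) (w : Euc n) :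
    fderiv ℝ (gradient u) (t • z) w = (t⁻¹ * t⁻¹) • fderiv ℝ (gradient u) z w := by
  have htz : t • z ≠ 0 := smul_ne_zero (ne_of_gt ht) hz
  have hmul : HasFDerivAt (fun y : Euc n => t • y) (t • ContinuousLinearMap.id ℝ (Euc n)) z :=
    (hasFDerivAt_id z).const_smul t
  have h1 : HasFDerivAt (fun y : Euc n => gradient u (t • y))
      ((fderiv ℝ (gradient u) (t • z)).comp (t • ContinuousLinearMap.id ℝ (Euc n))) z :=
    HasFDerivAt.comp z (grad_diff hsm htz).hasFDerivAt hmul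
  have h2 : HasFDerivAt (fun y : Euc n => t⁻¹ • gradient u y)
      (t⁻¹ • fderiv ℝ (gradient u) z) z :=
    ((grad_diff hsm hz).hasFDerivAt).const_smul t⁻¹
  have h3 : (fun y : Euc n => gradient u (t • y)) =ᶠ[𝓝 z]
      fun y : Euc n => t⁻¹ • gradient u y := by
    filter_upwards [isOpen_ne.mem_nhds hz] with y hy
    exact grad_scale hsm hom hy ht
  have h4 : (fderiv ℝ (gradient u) (t • z)).comp (t • ContinuousLinearMap.id ℝ (Euc n))
      = t⁻¹ • fderiv ℝ (gradient u) z :=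
    h1.unique (h2.congr_of_eventuallyEq h3)
  have h5 := congrFun (congrArg (fun (L : Euc n →L[ℝ] Euc n) => (L : Euc n → Euc n)) h4)
    (t⁻¹ • w)
  have ht0 : t ≠ 0 := ne_of_gt ht
  simpa [smul_smul, inv_mul_cancel₀ ht0, mul_inv_cancel₀ ht0] using h5

include hsm hom in
lemma hess_radial {z : Euc n} (hz : z ≠ 0) :
    fderiv ℝ (gradient u) z z = - gradient u z := by
  have hcurve : HasDerivAt (fun t : ℝ => t • z) z 1 := by
    simpa using (hasDerivAt_id (1:ℝ)).smul_const z
  have hfd : HasFDerivAt (gradient u) (fderiv ℝ (gradient u) ((1:ℝ) • z)) ((1:ℝ) • z) :=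
    (grad_diff hsm (by simpa using hz)).hasFDerivAt
  have h1 := HasFDerivAt.comp_hasDerivAt (f := fun t : ℝ => t • z) 1 hfd hcurve
  rw [one_smul] at h1
  have h2 : (fun t : ℝ => gradient u (t • z)) =ᶠ[𝓝 (1:ℝ)] fun t => t⁻¹ • gradient u z := by
    filter_upwards [eventually_gt_nhds zero_lt_one] with t ht
    exact grad_scale hsm hom hz ht
  have h3 : HasDerivAt (fun t : ℝ => t⁻¹ • gradient u z) (- gradient u z) 1 := by
    simpa using (hasDerivAt_inv (x := (1:ℝ)) one_ne_zero).smul_const (gradient u z)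
  have h4 : HasDerivAt (fun t : ℝ => gradient u (t • z)) (- gradient u z) 1 :=
    h3.congr_of_eventuallyEq h2
  exact h1.unique h4

include hsm in
lemma hess_symm {z : Euc n} (hz : z ≠ 0) (a b : Euc n) :
    ⟪fderiv ℝ (gradient u) z a, b⟫ = ⟪fderiv ℝ (gradient u) z b, a⟫ := by
  set f'' := fderiv ℝ (fderiv ℝ u) z with hf''def
  have hev : ∀ᶠ y in 𝓝 z, HasFDerivAt u (fderiv ℝ u y) y := by
    filter_upwards [isOpen_ne.mem_nhds hz] with y hy
    exact (diff_at hsm hy).hasFDerivAt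
  have hf'' : HasFDerivAt (fderiv ℝ u) f'' z :=
    ((fderiv_cd hsm hz).differentiableAt one_ne_zero).hasFDerivAt
  have hsym := second_derivative_symmetric_of_eventually hev hf''
  set L := ((InnerProductSpace.toDual ℝ (Euc n)).symm.toContinuousLinearEquiv :
    StrongDual ℝ (Euc n) ≃L[ℝ] Euc n).toContinuousLinearMap with hL
  have hG : HasFDerivAt (gradient u) (L.comp f'') z := L.hasFDerivAt.comp z hf''
  have hfd : fderiv ℝ (gradient u) z = L.comp f'' := hG.fderiv
  have key : ∀ w₁ w₂ : Euc n, ⟪fderiv ℝ (gradient u) z w₁, w₂⟫ = f'' w₁ w₂ := by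
    intro w₁ w₂
    rw [hfd]
    exact InnerProductSpace.toDual_symm_apply
  rw [key, key, hsym]
end Grad

end AuxLemmas

/-- Divergence of a vector field on Euclidean space: trace of its Fréchet derivative.
For a vector field which is tangent to the unit sphere and homogeneous along rays, this
coincides on the sphere with the divergence on the sphere. -/
def divg {n : ℕ} (W : Euc n → Euc n) (x : Euc n) : ℝ :=
  LinearMap.trace ℝ (Euc n) (fderiv ℝ W x).toLinearMap

/-- Laplacian (trace of the Hessian). For a `0`-homogeneous function this coincides on the
unit sphere with the Laplace–Beltrami operator of the sphere. -/
def lapl {n : ℕ} (u : Euc n → ℝ) (x : Euc n) : ℝ := divg (gradient u) x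

/-- The Hessian of `u` as a bilinear form: `hessBil u x X Y = D²u(x)[X, Y]`. For a
`0`-homogeneous `u` and `X, Y` tangent to the unit sphere at `x`, this coincides with the
covariant Hessian of `u` on the sphere. -/
def hessBil {n : ℕ} (u : Euc n → ℝ) (x X Y : Euc n) : ℝ :=
  ⟪fderiv ℝ (gradient u) x X, Y⟫

/-- A bounded star-shaped domain with smooth boundary in `ℝⁿ`, encoded by its radial
profile `u : S^{n-1} → (-1, ∞)` (so that `(1 + u(x))·x ∈ ∂K` for `x ∈ S^{n-1}`), extended
to `ℝⁿ \ {0}` as a `0`-homogeneous function. -/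
structure StarBody (n : ℕ) where
  u : Euc n → ℝ
  smooth : ContDiffOn ℝ (⊤ : ℕ∞) u {x : Euc n | x ≠ 0}
  homog : ∀ x : Euc n, x ≠ 0 → ∀ t : ℝ, 0 < t → u (t • x) = u x
  gtNegOne : ∀ x : Euc n, -1 < u x

namespace StarBody

variable {n : ℕ} (K : StarBody n)

/-- The map `T(x) = (1 + u(x))·x` sending the unit sphere onto `∂K`. -/
def T (x : Euc n) : Euc n := (1 + K.u x) • x

/-- The star-shaped domain `K = {r·x : x ∈ S^{n-1}, 0 ≤ r < 1 + u(x)}`. -/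
def body : Set (Euc n) := {0} ∪ {y : Euc n | y ≠ 0 ∧ ‖y‖ < 1 + K.u y}

/-- The boundary `∂K = T(S^{n-1})`. -/
def bdry : Set (Euc n) := {y : Euc n | y ≠ 0 ∧ ‖y‖ = 1 + K.u y}

/-- A defining function for `K`: `K = {Fdef < 0}`, `∂K = {Fdef = 0}` (away from `0`). -/
def Fdef (y : Euc n) : ℝ := ‖y‖ - (1 + K.u y)

/-- The outer unit normal to `∂K`, extended near `∂K` as the normalized gradient of the
defining function. -/
def normal (y : Euc n) : Euc n := ‖gradient K.Fdef y‖⁻¹ • gradient K.Fdef y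

/-- The mean curvature of `∂K` (trace of the second fundamental form with respect to the
outer unit normal), computed as the divergence of the unit normal field. -/
def meanCurv (y : Euc n) : ℝ := divg K.normal y

/-- The vector field `v = ∇u/(1 + u)` (the gradient being the gradient on the sphere). -/
def v (x : Euc n) : Euc n := (1 + K.u x)⁻¹ • gradient K.u x

end StarBody

set_option maxHeartbeats 2000000 in
/-- For a bounded star-shaped domain `K ⊆ ℝⁿ` with smooth boundary,
radial profile `u` and `v = ∇u/(1+u)`, the mean curvature of `∂K` at `T(x)`, `x ∈ S^{n-1}`,
is `H_{T(x)} = (1/((1+u)√(1+|v|²))) · (n−1 − Δu/(1+u) + |v|²/(1+|v|²)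
  + ∇²u[∇u,∇u]/((1+u)³(1+|v|²)))`, where `Δ` and `∇²` are the Laplace–Beltrami operator
and the Hessian on `S^{n-1}`. -/
theorem mean_curvature_formula (n : ℕ) (hn : 2 ≤ n) (K : StarBody n)
    (x : Euc n) (hx : x ∈ sphere (0 : Euc n) 1) :
    K.meanCurv (K.T x)
      = ((1 + K.u x) * Real.sqrt (1 + ‖K.v x‖ ^ 2))⁻¹
          * ((n : ℝ) - 1 - lapl K.u x / (1 + K.u x)
            + ‖K.v x‖ ^ 2 / (1 + ‖K.v x‖ ^ 2)
            + hessBil K.u x (gradient K.u x) (gradient K.u x)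
                / ((1 + K.u x) ^ 3 * (1 + ‖K.v x‖ ^ 2))) := by
  have hsm := K.smooth
  have hom := K.homog
  have hx1 : ‖x‖ = 1 := by simpa using mem_sphere_zero_iff_norm.1 hx
  have hx0 : x ≠ 0 := by
    intro h; rw [h, norm_zero] at hx1; exact zero_ne_one hx1
  obtain ⟨r, hrdef⟩ : ∃ r : ℝ, r = 1 + K.u x := ⟨_, rfl⟩
  have hr : 0 < r := by have := K.gtNegOne x; rw [hrdef]; linarith
  have hr0 : r ≠ 0 := ne_of_gt hr
  have hTx : K.T x = r • x := by rw [StarBody.T, ← hrdef]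
  have hy0ne : K.T x ≠ 0 := by rw [hTx]; exact smul_ne_zero hr0 hx0
  have hy0norm : ‖K.T x‖ = r := by
    rw [hTx, norm_smul, hx1, Real.norm_eq_abs, abs_of_pos hr, mul_one]
  -- gradient facts at x
  have haxi : ⟪gradient K.u x, x⟫ = 0 := by
    rw [inner_gradient]; exact euler hsm hom hx0
  have hxai : ⟪x, gradient K.u x⟫ = 0 := by rw [real_inner_comm]; exact haxi
  have hvval : K.v x = r⁻¹ • gradient K.u x := by rw [StarBody.v, ← hrdef]
  have hxv : ⟪x, K.v x⟫ = 0 := by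
    rw [hvval, real_inner_smul_right, hxai, mul_zero]
  have hgradT : gradient K.u (K.T x) = r⁻¹ • gradient K.u x := by
    rw [hTx]; exact grad_scale hsm hom hx0 hr
  -- the vector g0 = gradient of the defining function at T x
  obtain ⟨g0, hg0def⟩ : ∃ g0 : Euc n,
      g0 = ‖(K.T x)‖⁻¹ • (K.T x) - gradient K.u (K.T x) := ⟨_, rfl⟩
  have hg0val : g0 = x - K.v x := by
    rw [hg0def, hy0norm, hgradT, hTx, smul_smul, inv_mul_cancel₀ hr0, one_smul, hvval]
  have hgsq : ‖g0‖ ^ 2 = 1 + ‖K.v x‖ ^ 2 := by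
    rw [hg0val, norm_sub_sq_real, hx1, hxv]; ring
  have hgne : g0 ≠ 0 := by
    intro h
    rw [h, norm_zero] at hgsq
    nlinarith [sq_nonneg ‖K.v x‖]
  have hgn0 : ‖g0‖ ≠ 0 := norm_ne_zero_iff.2 hgne
  -- gradient of Fdef away from 0
  have hGrad : ∀ z : Euc n, z ≠ 0 →
      gradient K.Fdef z = ‖z‖⁻¹ • z - gradient K.u z := by
    intro z hz
    have hFd : HasFDerivAt K.Fdef ((‖z‖⁻¹ • innerSL ℝ z) - fderiv ℝ K.u z) z := by
      have h1 := hasFDerivAt_norm' hz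
      have h2 : HasFDerivAt (fun y : Euc n => 1 + K.u y) (fderiv ℝ K.u z) z :=
        ((diff_at hsm hz).hasFDerivAt).const_add 1
      exact h1.sub h2
    apply ext_inner_right ℝ
    intro w
    rw [inner_gradient, hFd.fderiv]
    simp only [ContinuousLinearMap.coe_sub', Pi.sub_apply, ContinuousLinearMap.smul_apply,
      innerSL_apply_apply, smul_eq_mul, inner_sub_left, real_inner_smul_left]
    rw [inner_gradient]
  -- Hessian facts
  have hHesx : fderiv ℝ (gradient K.u) x x = - gradient K.u x := hess_radial hsm hom hx0
  have hHy : ∀ w : Euc n, fderiv ℝ (gradient K.u) (K.T x) w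
      = (r⁻¹ * r⁻¹) • fderiv ℝ (gradient K.u) x w := by
    intro w; rw [hTx]; exact hess_scale hsm hom hx0 hr w
  have hHyCLM : fderiv ℝ (gradient K.u) (K.T x)
      = (r⁻¹ * r⁻¹) • fderiv ℝ (gradient K.u) x := by
    refine ContinuousLinearMap.ext fun w => (hHy w).trans ?_
    simp
  -- derivative of z ↦ ‖z‖⁻¹ • z - gradient u z at T x
  have hny0 : ‖K.T x‖ ≠ 0 := norm_ne_zero_iff.2 hy0ne
  obtain ⟨DG, hDGdef⟩ : ∃ DG : Euc n →L[ℝ] Euc n,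
      DG = (‖K.T x‖⁻¹ • ContinuousLinearMap.id ℝ (Euc n)
          + ((-(‖K.T x‖ ^ 2)⁻¹) • (‖K.T x‖⁻¹ • innerSL ℝ (K.T x))).smulRight (K.T x))
        - fderiv ℝ (gradient K.u) (K.T x) := ⟨_, rfl⟩
  have hc : HasFDerivAt (fun z : Euc n => ‖z‖⁻¹)
      ((-(‖K.T x‖ ^ 2)⁻¹) • (‖K.T x‖⁻¹ • innerSL ℝ (K.T x))) (K.T x) :=
    (hasDerivAt_inv hny0).comp_hasFDerivAt (K.T x) (hasFDerivAt_norm' hy0ne)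
  have hDG : HasFDerivAt (fun z : Euc n => ‖z‖⁻¹ • z - gradient K.u z) DG (K.T x) := by
    rw [hDGdef]
    exact (hc.smul (hasFDerivAt_id _)).sub (grad_diff hsm hy0ne).hasFDerivAt
  -- derivative of the unit normal field
  have hGnorm : HasFDerivAt (fun z : Euc n => ‖(‖z‖⁻¹ • z - gradient K.u z : Euc n)‖)
      ((‖g0‖⁻¹ • innerSL ℝ g0).comp DG) (K.T x) := by
    have hgne' : (‖K.T x‖⁻¹ • K.T x - gradient K.u (K.T x)) ≠ 0 := by
      rw [← hg0def]; exact hgne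
    have h := (hasFDerivAt_norm' hgne').comp (K.T x) hDG
    rw [← hg0def] at h
    exact h
  have hcinv : HasFDerivAt (fun z : Euc n => ‖(‖z‖⁻¹ • z - gradient K.u z : Euc n)‖⁻¹)
      ((-(‖g0‖ ^ 2)⁻¹) • ((‖g0‖⁻¹ • innerSL ℝ g0).comp DG)) (K.T x) := by
    have hgn0' : ‖(‖K.T x‖⁻¹ • K.T x - gradient K.u (K.T x) : Euc n)‖ ≠ 0 := by
      rw [← hg0def]; exact hgn0
    have h := (hasDerivAt_inv hgn0').comp_hasFDerivAt (K.T x) hGnorm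
    rw [← hg0def] at h
    exact h
  obtain ⟨DN, hDNdef⟩ : ∃ DN : Euc n →L[ℝ] Euc n,
      DN = ‖g0‖⁻¹ • DG
        + ((-(‖g0‖ ^ 2)⁻¹) • ((‖g0‖⁻¹ • innerSL ℝ g0).comp DG)).smulRight g0 := ⟨_, rfl⟩
  have hD : HasFDerivAt
      (fun z : Euc n => ‖(‖z‖⁻¹ • z - gradient K.u z : Euc n)‖⁻¹
        • (‖z‖⁻¹ • z - gradient K.u z)) DN (K.T x) := by
    rw [hDNdef]
    have h := hcinv.smul hDG
    rw [← hg0def] at h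
    exact h
  have hNeq : K.normal =ᶠ[𝓝 (K.T x)]
      (fun z : Euc n => ‖(‖z‖⁻¹ • z - gradient K.u z : Euc n)‖⁻¹
        • (‖z‖⁻¹ • z - gradient K.u z)) := by
    filter_upwards [isOpen_ne.mem_nhds hy0ne] with z hz
    rw [StarBody.normal, hGrad z hz]
  have hN : HasFDerivAt K.normal DN (K.T x) := hD.congr_of_eventuallyEq hNeq
  have hMC : K.meanCurv (K.T x) = LinearMap.trace ℝ (Euc n) (DN : Euc n →ₗ[ℝ] Euc n) := by
    rw [StarBody.meanCurv, divg, hN.fderiv]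
  -- trace of DN
  have ht1 : LinearMap.trace ℝ (Euc n) (DN : Euc n →ₗ[ℝ] Euc n)
      = ‖g0‖⁻¹ * LinearMap.trace ℝ (Euc n) (DG : Euc n →ₗ[ℝ] Euc n)
        + (-(‖g0‖ ^ 2)⁻¹) * (‖g0‖⁻¹ * ⟪g0, DG g0⟫) := by
    rw [hDNdef, ContinuousLinearMap.coe_add, (LinearMap.trace ℝ (Euc n)).map_add,
      ContinuousLinearMap.coe_smul, (LinearMap.trace ℝ (Euc n)).map_smul, trace_smulRight]
    simp [mul_assoc]
  -- trace of DG
  have hlapl : LinearMap.trace ℝ (Euc n)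
      ((fderiv ℝ (gradient K.u) x : Euc n →L[ℝ] Euc n) : Euc n →ₗ[ℝ] Euc n) = lapl K.u x := rfl
  have ht2 : LinearMap.trace ℝ (Euc n) (DG : Euc n →ₗ[ℝ] Euc n)
      = r⁻¹ * (n : ℝ) - r⁻¹ - (r⁻¹ * r⁻¹) * lapl K.u x := by
    rw [hDGdef, hHyCLM, ContinuousLinearMap.coe_sub, (LinearMap.trace ℝ (Euc n)).map_sub,
      ContinuousLinearMap.coe_add, (LinearMap.trace ℝ (Euc n)).map_add,
      ContinuousLinearMap.coe_smul, (LinearMap.trace ℝ (Euc n)).map_smul,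
      ContinuousLinearMap.coe_smul, (LinearMap.trace ℝ (Euc n)).map_smul,
      ContinuousLinearMap.coe_id, LinearMap.trace_id, trace_smulRight, hlapl]
    have hTT : ⟪K.T x, K.T x⟫ = r ^ 2 := by
      rw [real_inner_self_eq_norm_sq, hy0norm]
    simp only [ContinuousLinearMap.smul_apply, innerSL_apply_apply, smul_eq_mul, hTT, hy0norm,
      finrank_euclideanSpace, Fintype.card_fin]
    field_simp
    ring
  -- the inner product ⟪g0, DG g0⟫
  have hxx : ⟪x, x⟫ = (1:ℝ) := by rw [real_inner_self_eq_norm_sq, hx1]; norm_num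
  have hTg : ⟪K.T x, g0⟫ = r := by
    rw [hTx, hg0val, inner_sub_right, real_inner_smul_left, real_inner_smul_left, hxx, hxv]
    ring
  have hgg : ⟪g0, g0⟫ = 1 + ‖K.v x‖ ^ 2 := by
    rw [real_inner_self_eq_norm_sq, hgsq]
  have hgT : ⟪g0, K.T x⟫ = r := by rw [real_inner_comm]; exact hTg
  have hDGg0 : DG g0 = ‖K.T x‖⁻¹ • g0
      + (-(‖K.T x‖ ^ 2)⁻¹ * (‖K.T x‖⁻¹ * ⟪K.T x, g0⟫)) • K.T x
      - fderiv ℝ (gradient K.u) (K.T x) g0 := by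
    rw [hDGdef]
    simp only [ContinuousLinearMap.coe_sub', Pi.sub_apply, ContinuousLinearMap.add_apply,
      ContinuousLinearMap.smul_apply, ContinuousLinearMap.coe_id', id_eq,
      ContinuousLinearMap.smulRight_apply, innerSL_apply_apply, smul_eq_mul]
  have hgHug : ⟪g0, fderiv ℝ (gradient K.u) x g0⟫
      = 2 * r⁻¹ * ‖gradient K.u x‖ ^ 2
        + (r⁻¹ * r⁻¹) * hessBil K.u x (gradient K.u x) (gradient K.u x) := by
    have hg0' : g0 = x - r⁻¹ • gradient K.u x := by rw [hg0val, hvval]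
    have hxHa : ⟪x, fderiv ℝ (gradient K.u) x (gradient K.u x)⟫
        = -(‖gradient K.u x‖ ^ 2) := by
      rw [real_inner_comm, hess_symm hsm hx0 (gradient K.u x) x, hHesx, inner_neg_left,
        real_inner_self_eq_norm_sq]
    have haHa : ⟪gradient K.u x, fderiv ℝ (gradient K.u) x (gradient K.u x)⟫
        = hessBil K.u x (gradient K.u x) (gradient K.u x) := by
      rw [real_inner_comm]; rfl
    rw [hg0']
    rw [map_sub, ContinuousLinearMap.map_smul, hHesx]
    simp only [inner_sub_left, inner_sub_right, inner_neg_right, real_inner_smul_left,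
      real_inner_smul_right, hxai, haxi, hxHa, haHa, real_inner_self_eq_norm_sq, smul_eq_mul]
    ring
  have hgDGg : ⟪g0, DG g0⟫
      = r⁻¹ * (1 + ‖K.v x‖ ^ 2) - r⁻¹
        - (r⁻¹ * r⁻¹) * (2 * r⁻¹ * ‖gradient K.u x‖ ^ 2
          + (r⁻¹ * r⁻¹) * hessBil K.u x (gradient K.u x) (gradient K.u x)) := by
    rw [hDGg0]
    simp only [inner_sub_right, inner_add_right, real_inner_smul_right]
    rw [hHy g0]
    simp only [real_inner_smul_right]
    rw [hgg, hTg, hgT, hgHug, hy0norm]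
    field_simp
    ring
  -- norms of the gradient vs v
  have hva : ‖gradient K.u x‖ ^ 2 = r ^ 2 * ‖K.v x‖ ^ 2 := by
    have h1 : ‖K.v x‖ = r⁻¹ * ‖gradient K.u x‖ := by
      rw [hvval, norm_smul, Real.norm_eq_abs, abs_of_pos (inv_pos.2 hr)]
    rw [h1]
    field_simp
  -- final algebra
  have hS0 : (0:ℝ) < 1 + ‖K.v x‖ ^ 2 := by positivity
  have hs : ‖g0‖ = Real.sqrt (1 + ‖K.v x‖ ^ 2) := by
    rw [← hgsq, Real.sqrt_sq (norm_nonneg _)]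
  have hS2 : Real.sqrt (1 + ‖K.v x‖ ^ 2) ^ 2 = 1 + ‖K.v x‖ ^ 2 := Real.sq_sqrt hS0.le
  have hSpos : 0 < Real.sqrt (1 + ‖K.v x‖ ^ 2) := Real.sqrt_pos.2 hS0
  have hSne : Real.sqrt (1 + ‖K.v x‖ ^ 2) ≠ 0 := ne_of_gt hSpos
  rw [hMC, ht1, ht2, hgDGg, hva, hs, ← hrdef]
  generalize Real.sqrt (1 + ‖K.v x‖ ^ 2) = S at hS2 hSne hSpos ⊢
  rw [← hS2]
  have hV : ‖K.v x‖ ^ 2 = S ^ 2 - 1 := by rw [hS2]; ring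
  rw [hV]
  field_simp
  ring
end
end

section
/- There exist a universal constant ε₀ > 0 and a constant C(n) > 0 depending only on the dimension n such that the following holds. Let K ⊆ ℝⁿ be a bounded star-shaped domain with smooth boundary, let u : S^{n-1} → (−1, ∞) be the function with T(x) := (1+u(x))x ∈ ∂K for all x ∈ S^{n-1}, and let ν : ∂K → S^{n-1} be the outer unit normal. If y = T(x) and |ν(y) − y/|y|| < ε₀, then |∇u(x)|/(1+u(x)) ≤ C(n)·|ν(y) − y/|y||. -/
open MeasureTheory Metric Set Real
open scoped ENNReal RealInnerProductSpace

noncomputable section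

section Helpers

variable {E : Type*} [NormedAddCommGroup E] [InnerProductSpace ℝ E] [CompleteSpace E]

lemma hasGradientAt_norm {y : E} (hy : y ≠ 0) :
    HasGradientAt (fun z => ‖z‖) (‖y‖⁻¹ • y) y := by
  have hsq : HasFDerivAt (fun z : E => ‖z‖ ^ 2) (2 • (innerSL ℝ y)) y :=
    (hasStrictFDerivAt_norm_sq y).hasFDerivAt
  have hy' : (0:ℝ) < ‖y‖ := norm_pos_iff.mpr hy
  have hpos : (0:ℝ) < ‖y‖ ^ 2 := by positivity
  have hsqrt : HasDerivAt Real.sqrt (1 / (2 * Real.sqrt (‖y‖ ^ 2))) (‖y‖ ^ 2) :=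
    Real.hasDerivAt_sqrt (ne_of_gt hpos)
  have hcomp : HasFDerivAt (fun z : E => Real.sqrt (‖z‖ ^ 2))
      ((1 / (2 * Real.sqrt (‖y‖ ^ 2))) • (2 • (innerSL ℝ y))) y :=
    hsqrt.comp_hasFDerivAt y hsq
  have heq : (fun z : E => Real.sqrt (‖z‖ ^ 2)) = fun z => ‖z‖ := by
    funext z; rw [Real.sqrt_sq (norm_nonneg z)]
  rw [heq] at hcomp
  rw [hasGradientAt_iff_hasFDerivAt]
  convert hcomp using 1
  · rfl
  ext w
  have hnorm : Real.sqrt (‖y‖ ^ 2) = ‖y‖ := Real.sqrt_sq (norm_nonneg y)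
  simp only [InnerProductSpace.toDual_apply_apply, ContinuousLinearMap.smul_apply,
    ContinuousLinearMap.smul_apply, innerSL_apply_apply, hnorm, smul_eq_mul,
    real_inner_smul_left]
  have : ‖y‖ ≠ 0 := norm_ne_zero_iff.mpr hy
  field_simp
  ring

end Helpers

namespace StarBody

variable {n : ℕ} (K : StarBody n)

lemma diffAt {z : Euc n} (hz : z ≠ 0) : DifferentiableAt ℝ K.u z :=
  (K.smooth.contDiffAt (IsOpen.mem_nhds (isOpen_compl_singleton) hz)).differentiableAt (by simp)

lemma hasGradientAt_u {z : Euc n} (hz : z ≠ 0) : HasGradientAt K.u (gradient K.u z) z :=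
  (K.diffAt hz).hasGradientAt

/-- radial derivative vanishes -/
lemma inner_gradient_self {x : Euc n} (hx : x ≠ 0) : ⟪gradient K.u x, x⟫ = 0 := by
  have hfd : HasFDerivAt K.u (InnerProductSpace.toDual ℝ _ (gradient K.u x)) x :=
    hasGradientAt_iff_hasFDerivAt.mp (K.hasGradientAt_u hx)
  have hc : HasDerivAt (fun t : ℝ => t • x) ((1:ℝ) • x) 1 := (hasDerivAt_id 1).smul_const x
  have hfd1 : HasFDerivAt K.u (InnerProductSpace.toDual ℝ _ (gradient K.u x)) ((1:ℝ) • x) := by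
    rw [one_smul]; exact hfd
  have h1 : HasDerivAt (fun t : ℝ => K.u (t • x))
      (InnerProductSpace.toDual ℝ _ (gradient K.u x) ((1:ℝ) • x)) 1 :=
    hfd1.comp_hasDerivAt 1 hc
  have h2 : HasDerivAt (fun t : ℝ => K.u (t • x)) 0 1 := by
    have hev : (fun t : ℝ => K.u (t • x)) =ᶠ[nhds 1] fun _ => K.u x := by
      filter_upwards [Ioi_mem_nhds (show (0:ℝ) < 1 by norm_num)] with t ht
      exact K.homog x hx t ht
    exact (hasDerivAt_const 1 (K.u x)).congr_of_eventuallyEq hev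
  have := h1.unique h2
  simpa using this

lemma gradient_homog {x : Euc n} (hx : x ≠ 0) {a : ℝ} (ha : 0 < a) :
    gradient K.u (a • x) = a⁻¹ • gradient K.u x := by
  have hax : a • x ≠ 0 := smul_ne_zero (ne_of_gt ha) hx
  have hfy : HasFDerivAt K.u (InnerProductSpace.toDual ℝ _ (gradient K.u (a • x))) (a • x) :=
    hasGradientAt_iff_hasFDerivAt.mp (K.hasGradientAt_u hax)
  have hsm : HasFDerivAt (fun z : Euc n => a • z) (a • ContinuousLinearMap.id ℝ (Euc n)) x := by
    exact (hasFDerivAt_id (𝕜 := ℝ) x).const_smul a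
  have hcomp : HasFDerivAt (fun z : Euc n => K.u (a • z))
      ((InnerProductSpace.toDual ℝ _ (gradient K.u (a • x))).comp
        (a • ContinuousLinearMap.id ℝ (Euc n))) x := hfy.comp x hsm
  have hev : (fun z : Euc n => K.u (a • z)) =ᶠ[nhds x] K.u := by
    filter_upwards [IsOpen.mem_nhds (isOpen_compl_singleton) hx] with z hz
    exact K.homog z hz a ha
  have hcomp' : HasFDerivAt K.u
      ((InnerProductSpace.toDual ℝ _ (gradient K.u (a • x))).comp
        (a • ContinuousLinearMap.id ℝ (Euc n))) x := by
    refine hcomp.congr_of_eventuallyEq hev.symm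
  have hfx : HasFDerivAt K.u (InnerProductSpace.toDual ℝ _ (gradient K.u x)) x :=
    hasGradientAt_iff_hasFDerivAt.mp (K.hasGradientAt_u hx)
  have huniq := hfx.unique hcomp'
  refine ext_inner_right ℝ fun w => ?_
  have := congrArg (fun L : Euc n →L[ℝ] ℝ => L w) huniq
  simp only [ContinuousLinearMap.comp_apply, ContinuousLinearMap.smul_apply,
    ContinuousLinearMap.id_apply, InnerProductSpace.toDual_apply_apply] at this
  rw [real_inner_smul_right] at this
  rw [real_inner_smul_left, this, inv_mul_cancel_left₀ (ne_of_gt ha)]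

lemma gradient_Fdef {x : Euc n} (hx : ‖x‖ = 1) :
    gradient K.Fdef (K.T x) = x - (1 + K.u x)⁻¹ • gradient K.u x := by
  have hx0 : x ≠ 0 := by intro h; rw [h] at hx; simp at hx
  set a : ℝ := 1 + K.u x with ha_def
  have ha : 0 < a := by have := K.gtNegOne x; simp [ha_def]; linarith
  have hy0 : K.T x ≠ 0 := smul_ne_zero (ne_of_gt ha) hx0
  have hny : ‖K.T x‖ = a := by
    rw [StarBody.T, norm_smul, hx, Real.norm_eq_abs, abs_of_pos ha, mul_one]
  have hgn : HasGradientAt (fun z : Euc n => ‖z‖) x (K.T x) := by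
    have := hasGradientAt_norm (E := Euc n) hy0
    rwa [hny, StarBody.T, smul_smul, inv_mul_cancel₀ (ne_of_gt ha), one_smul] at this
  have hgu : HasGradientAt K.u (a⁻¹ • gradient K.u x) (K.T x) := by
    have := K.hasGradientAt_u hy0
    rwa [show gradient K.u (K.T x) = a⁻¹ • gradient K.u x from K.gradient_homog hx0 ha] at this
  have hF : HasGradientAt K.Fdef (x - a⁻¹ • gradient K.u x) (K.T x) := by
    rw [hasGradientAt_iff_hasFDerivAt, map_sub]
    have h1 := hasGradientAt_iff_hasFDerivAt.mp hgn
    have h2 := hasGradientAt_iff_hasFDerivAt.mp hgu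
    have : HasFDerivAt (fun z : Euc n => 1 + K.u z)
        (InnerProductSpace.toDual ℝ _ (a⁻¹ • gradient K.u x)) (K.T x) := by
      exact h2.const_add 1
    exact h1.sub this
  exact hF.gradient

end StarBody

set_option maxHeartbeats 1000000

/-- There are a universal constant `ε₀ > 0` and a dimensional constant
`C(n) > 0` such that for every bounded star-shaped domain `K ⊆ ℝⁿ` with smooth boundary
and radial profile `u`, for every `x ∈ S^{n-1}` and `y = T(x)`: if `|ν(y) − y/|y|| < ε₀`
then `|∇u(x)|/(1+u(x)) ≤ C(n)·|ν(y) − y/|y||`. -/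
theorem gradient_controlled_by_normal_deviation :
    ∃ ε₀ : ℝ, 0 < ε₀ ∧ ∀ n : ℕ, ∃ C : ℝ, 0 < C ∧ ∀ K : StarBody n,
      ∀ x ∈ sphere (0 : Euc n) 1,
        ‖K.normal (K.T x) - ‖K.T x‖⁻¹ • K.T x‖ < ε₀ →
        ‖gradient K.u x‖ / (1 + K.u x) ≤ C * ‖K.normal (K.T x) - ‖K.T x‖⁻¹ • K.T x‖ := by
  refine ⟨1/2, by norm_num, fun n => ⟨2, by norm_num, fun K x hx hδ => ?_⟩⟩
  rw [mem_sphere_iff_norm, sub_zero] at hx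
  have hx0 : x ≠ 0 := by intro h; rw [h] at hx; simp at hx
  set a : ℝ := 1 + K.u x with ha_def
  have ha : 0 < a := by have := K.gtNegOne x; simp only [ha_def]; linarith
  have hny : ‖K.T x‖ = a := by
    rw [StarBody.T, norm_smul, hx, Real.norm_eq_abs, abs_of_pos ha, mul_one]
  have hTx : ‖K.T x‖⁻¹ • K.T x = x := by
    rw [hny, StarBody.T, smul_smul, inv_mul_cancel₀ (ne_of_gt ha), one_smul]
  set v : Euc n := a⁻¹ • gradient K.u x with hv_def
  have hg : gradient K.Fdef (K.T x) = x - v := K.gradient_Fdef hx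
  have hvx : ⟪x, v⟫ = 0 := by
    rw [hv_def, real_inner_smul_right, real_inner_comm, K.inner_gradient_self hx0, mul_zero]
  have hvx' : ⟪v, x⟫ = 0 := by rw [real_inner_comm]; exact hvx
  set t : ℝ := ‖v‖ with ht_def
  have ht0 : 0 ≤ t := norm_nonneg v
  set N : ℝ := ‖x - v‖ with hN_def
  have hN2 : N ^ 2 = 1 + t ^ 2 := by
    rw [hN_def, ht_def, norm_sub_sq_real, hvx, hx]; ring
  have hNnn : 0 ≤ N := norm_nonneg (x - v)
  have hnormal : K.normal (K.T x) = N⁻¹ • (x - v) := by rw [StarBody.normal, hg]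
  set d := K.normal (K.T x) - ‖K.T x‖⁻¹ • K.T x with hd_def
  have hd : d = N⁻¹ • (x - v) - x := by rw [hd_def, hnormal, hTx]
  have hvv : ⟪v, v⟫ = t ^ 2 := real_inner_self_eq_norm_sq v
  have hdv : ⟪d, v⟫ = -(N⁻¹ * t ^ 2) := by
    rw [hd, inner_sub_left, real_inner_smul_left, inner_sub_left, hvv, hvx]
    ring
  have hCS : |⟪d, v⟫| ≤ ‖d‖ * t := abs_real_inner_le_norm d v
  rw [hdv, abs_neg, abs_of_nonneg (mul_nonneg (inv_nonneg.mpr hNnn) (sq_nonneg t))] at hCS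
  have hδ0 : 0 ≤ ‖d‖ := norm_nonneg d
  have hδlt : ‖d‖ < 1/2 := hδ
  set δ : ℝ := ‖d‖ with hδ_def
  clear_value t N d
  clear_value δ
  have hN1 : 1 ≤ N := by nlinarith
  have hN0 : (0:ℝ) < N := lt_of_lt_of_le one_pos hN1
  have htN : t ≤ N * δ := by
    rcases eq_or_lt_of_le ht0 with h0 | h0
    · rw [← h0]; exact mul_nonneg hNnn hδ0
    · have hCS' : t ^ 2 ≤ N * (δ * t) := by
        rwa [inv_mul_le_iff₀ hN0] at hCS
      have h2 : t * t ≤ (N * δ) * t := by nlinarith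
      exact le_of_mul_le_mul_right h2 h0
  have hδ2 : δ ^ 2 < 1/4 := by nlinarith
  have hsq : t ^ 2 ≤ N ^ 2 * δ ^ 2 := by nlinarith
  have hN4 : N ^ 2 ≤ 4 := by nlinarith
  have hNle2 : N ≤ 2 := by nlinarith
  have hLHS : ‖gradient K.u x‖ / (1 + K.u x) = t := by
    rw [ht_def, hv_def, norm_smul, Real.norm_eq_abs, abs_of_pos (inv_pos.mpr ha), ← ha_def,
      div_eq_inv_mul]
  rw [hLHS]
  calc t ≤ N * δ := htN
    _ ≤ 2 * δ := mul_le_mul_of_nonneg_right hNle2 hδ0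
end
end
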